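/- Let $d \in \mathbb{N}$, let $K \subseteq \mathbb{R}^d$ be a compact set with $\mathrm{vol}(K) > 0$, and let $(H_\varepsilon)_{\varepsilon \in (0,1]}$ be a net of smooth functions on $\mathbb{R}^d \times \mathbb{R}^d$ with $\mathrm{supp}\, H_\varepsilon \subseteq K \times K$ for all $\varepsilon$, which is of logarithmic type: for every compact $A \subseteq \mathbb{R}^{2d}$ and every $l \in \mathbb{N}$ there exists $C > 0$ and $\varepsilon_0 \in (0,1]$ with $p_{A,l}(H_\varepsilon) \le C |\ln \varepsilon|$ for all $\varepsilon \le \varepsilon_0$. For each $\varepsilon$ define $L_{1,\varepsilon} = H_\varepsilon$, $L_{n+1,\varepsilon}(x,y) = \int_K H_\varepsilon(x,\xi) L_{n,\varepsilon}(\xi,y)\, \mathrm{d}\xi$, and $S_\varepsilon = \sum_{n=1}^{\infty} \frac{L_{n,\varepsilon}}{n!}$ (the series converging uniformly on compact sets together with all derivatives). Then $(S_\varepsilon)$ is a moderate net: for every compact $A \subseteq \mathbb{R}^{2d}$ and every $l \in \mathbb{N}$ there exist $q \in \mathbb{N}$, $C > 0$ and $\varepsilon_0$ such that $p_{A,l}(S_\varepsilon)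 \le C \varepsilon^{-q}$ for all $\varepsilon \le \varepsilon_0$. -/

import Mathlib

open MeasureTheory Set Filter

noncomputable def dirDeriv {E : Type*} [NormedAddCommGroup E] [NormedSpace ℝ E]
    (v : E) (f : E → ℂ) : E → ℂ := fun x => fderiv ℝ f x v

noncomputable def itDeriv {E : Type*} [NormedAddCommGroup E] [NormedSpace ℝ E] :
    List E → (E → ℂ) → E → ℂ
  | [] => fun f => f
  | v :: vs => fun f => itDeriv vs (dirDeriv v f)

/-- The standard basis directions of the product space `ℝ^m × ℝ^n`. -/
def prodDirs (m n : ℕ) : Set ((Fin m → ℝ) × (Fin n → ℝ)) :=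
  {v | (∃ i, v = (Pi.single i (1:ℝ), 0)) ∨ ∃ j, v = (0, Pi.single j (1:ℝ))}

/-- The standard basis directions of `ℝ^d`. -/
def stdDirs (d : ℕ) : Set (Fin d → ℝ) := {v | ∃ i, v = Pi.single i (1:ℝ)}

/-- The seminorm `p_{A,l}(f)`: the sup over `x ∈ A` and over all partial derivatives
(iterated directional derivatives along basis directions from `B`) of order `≤ l`. -/
noncomputable def pSemi {E : Type*} [NormedAddCommGroup E] [NormedSpace ℝ E]
    (B A : Set E) (l : ℕ) (f : E → ℂ) : ℝ :=
  sSup {r | ∃ vs : List E, vs.length ≤ l ∧ (∀ v ∈ vs, v ∈ B) ∧ ∃ x ∈ A, r = ‖itDeriv vs f x‖}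

/-- A net `(f_ε)_{ε ∈ (0,1]}` is moderate if every seminorm grows at most
polynomially in `1/ε` as `ε → 0`. -/
def IsModerate {E : Type*} [NormedAddCommGroup E] [NormedSpace ℝ E]
    (B : Set E) (f : ℝ → E → ℂ) : Prop :=
  ∀ A : Set E, IsCompact A → ∀ l : ℕ, ∃ q : ℕ, ∃ C > (0:ℝ), ∃ ε₀ ∈ Ioc (0:ℝ) 1,
    ∀ ε ∈ Ioc (0:ℝ) 1, ε ≤ ε₀ → pSemi B A l (f ε) ≤ C * ε ^ (-(q:ℤ))

/-- A net `(f_ε)_{ε ∈ (0,1]}` is negligible if every seminorm is `O(ε^p)` for all `p`. -/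
def IsNegligible {E : Type*} [NormedAddCommGroup E] [NormedSpace ℝ E]
    (B : Set E) (f : ℝ → E → ℂ) : Prop :=
  ∀ A : Set E, IsCompact A → ∀ l : ℕ, ∀ p : ℕ, ∃ C > (0:ℝ), ∃ ε₀ ∈ Ioc (0:ℝ) 1,
    ∀ ε ∈ Ioc (0:ℝ) 1, ε ≤ ε₀ → pSemi B A l (f ε) ≤ C * ε ^ p

/-- The iterated kernels: `iterKer S H n` is the kernel `L_{n+1}` of the paper,
i.e. `L_1 = H` and `L_{n+1}(x,y) = ∫_S H(x,ξ) L_n(ξ,y) dξ` for `n ≥ 1`. -/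
noncomputable def iterKer {d : ℕ} (S : Set (Fin d → ℝ))
    (H : (Fin d → ℝ) × (Fin d → ℝ) → ℂ) : ℕ → (Fin d → ℝ) × (Fin d → ℝ) → ℂ
  | 0 => H
  | n + 1 => fun q => ∫ ξ in S, H (q.1, ξ) * iterKer S H n (ξ, q.2)

open scoped ContDiff

namespace ExpKerAux

variable {E : Type*} [NormedAddCommGroup E] [NormedSpace ℝ E]

lemma itDeriv_nil (f : E → ℂ) : itDeriv [] f = f := rfl

lemma itDeriv_cons (v : E) (vs : List E) (f : E → ℂ) :
    itDeriv (v :: vs) f = itDeriv vs (dirDeriv v f) := rfl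

lemma contDiff_dirDeriv {f : E → ℂ} (hf : ContDiff ℝ (⊤:ℕ∞) f) (v : E) :
    ContDiff ℝ (⊤:ℕ∞) (dirDeriv v f) :=
  (hf.fderiv_right (m := ((⊤:ℕ∞) : WithTop ℕ∞)) (by exact_mod_cast le_top)).clm_apply
    contDiff_const

lemma contDiff_itDeriv {f : E → ℂ} (hf : ContDiff ℝ (⊤:ℕ∞) f) (vs : List E) :
    ContDiff ℝ (⊤:ℕ∞) (itDeriv vs f) := by
  induction vs generalizing f with
  | nil => exact hf
  | cons v vs ih => exact ih (contDiff_dirDeriv hf v)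

lemma support_dirDeriv {f : E → ℂ} {C : Set E} (hC : IsClosed C)
    (h : Function.support f ⊆ C) (v : E) : Function.support (dirDeriv v f) ⊆ C := by
  intro x hx
  have h0 : fderiv ℝ f x ≠ 0 := by
    intro h0
    apply hx
    simp [dirDeriv, h0]
  have hx' : x ∈ tsupport f := support_fderiv_subset (𝕜 := ℝ) h0
  exact (closure_minimal h hC) hx'

lemma support_itDeriv {f : E → ℂ} {C : Set E} (hC : IsClosed C)
    (h : Function.support f ⊆ C) (vs : List E) :
    Function.support (itDeriv vs f) ⊆ C := by
  induction vs generalizing f with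
  | nil => exact h
  | cons v vs ih => exact ih (support_dirDeriv hC h v)

lemma itDeriv_const_mul {f : E → ℂ} (hf : ContDiff ℝ (⊤:ℕ∞) f) (c : ℂ) (vs : List E) :
    itDeriv vs (fun x => c * f x) = fun x => c * itDeriv vs f x := by
  induction vs generalizing f with
  | nil => rfl
  | cons v vs ih =>
    have h1 : dirDeriv v (fun x => c * f x) = fun x => c * dirDeriv v f x := by
      funext x
      simp only [dirDeriv]
      rw [fderiv_const_mul (hf.differentiable (by simp) x)]
      simp
    rw [itDeriv_cons, h1, itDeriv_cons, ih (contDiff_dirDeriv hf v)]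

lemma norm_itDeriv_le_iteratedFDeriv {f : E → ℂ} (hf : ContDiff ℝ (⊤:ℕ∞) f) (vs : List E)
    (hvs : ∀ v ∈ vs, ‖v‖ ≤ 1) (x : E) :
    ‖itDeriv vs f x‖ ≤ ‖iteratedFDeriv ℝ vs.length f x‖ := by
  induction vs generalizing f with
  | nil => rw [itDeriv_nil, List.length_nil, norm_iteratedFDeriv_zero]
  | cons v vs ih =>
    rw [itDeriv_cons]
    calc ‖itDeriv vs (dirDeriv v f) x‖
        ≤ ‖iteratedFDeriv ℝ vs.length (dirDeriv v f) x‖ :=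
          ih (contDiff_dirDeriv hf v) (fun w hw => hvs w (List.mem_cons_of_mem _ hw))
      _ ≤ ‖v‖ * ‖iteratedFDeriv ℝ vs.length (fderiv ℝ f) x‖ :=
          norm_iteratedFDeriv_clm_apply_const
            (hf.fderiv_right (m := ((⊤:ℕ∞) : WithTop ℕ∞)) (by exact_mod_cast le_top)).contDiffAt
            (by exact_mod_cast le_top)
      _ ≤ ‖iteratedFDeriv ℝ vs.length (fderiv ℝ f) x‖ :=
          mul_le_of_le_one_left (norm_nonneg _) (hvs v List.mem_cons_self)
      _ = ‖iteratedFDeriv ℝ (v :: vs).length f x‖ := by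
          rw [norm_iteratedFDeriv_fderiv, List.length_cons]

lemma exists_uniform_bound {f : E → ℂ} (hf : ContDiff ℝ (⊤:ℕ∞) f) {A : Set E}
    (hA : IsCompact A) (l : ℕ) :
    ∃ R : ℝ, 0 ≤ R ∧ ∀ k ≤ l, ∀ x ∈ A, ‖iteratedFDeriv ℝ k f x‖ ≤ R := by
  induction l with
  | zero =>
    obtain ⟨R, hR⟩ := hA.exists_bound_of_continuousOn
      (hf.continuous_iteratedFDeriv (m := 0) (by exact_mod_cast le_top)).continuousOn
    refine ⟨max R 0, le_max_right _ _, fun k hk x hx => ?_⟩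
    interval_cases k
    exact le_trans (hR x hx) (le_max_left _ _)
  | succ l ih =>
    obtain ⟨R1, hR10, hR1⟩ := ih
    obtain ⟨R2, hR2⟩ := hA.exists_bound_of_continuousOn
      (hf.continuous_iteratedFDeriv (m := l + 1) (by exact_mod_cast le_top)).continuousOn
    refine ⟨max R1 R2, le_trans hR10 (le_max_left _ _), fun k hk x hx => ?_⟩
    rcases Nat.lt_succ_iff_lt_or_eq.1 (Nat.lt_succ_of_le hk) with h | h
    · exact le_trans (hR1 k (Nat.lt_succ_iff.1 h) x hx) (le_max_left _ _)
    · subst h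
      exact le_trans (hR2 x hx) (le_max_right _ _)

end ExpKerAux
namespace ExpKerAux2

variable {d : ℕ}

noncomputable def lam1 (d : ℕ) (i : Fin d) : ((Fin d → ℝ) × (Fin d → ℝ)) →L[ℝ] ℂ :=
  Complex.ofRealCLM.comp ((ContinuousLinearMap.proj i).comp
    (ContinuousLinearMap.fst ℝ (Fin d → ℝ) (Fin d → ℝ)))

noncomputable def lam2 (d : ℕ) (j : Fin d) : ((Fin d → ℝ) × (Fin d → ℝ)) →L[ℝ] ℂ :=
  Complex.ofRealCLM.comp ((ContinuousLinearMap.proj j).comp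
    (ContinuousLinearMap.snd ℝ (Fin d → ℝ) (Fin d → ℝ)))

lemma lam1_apply (i : Fin d) (p : (Fin d → ℝ) × (Fin d → ℝ)) :
    lam1 d i p = (p.1 i : ℂ) := rfl

lemma lam2_apply (j : Fin d) (p : (Fin d → ℝ) × (Fin d → ℝ)) :
    lam2 d j p = (p.2 j : ℂ) := rfl

lemma pi_single_sum (u : Fin d → ℝ) :
    ∑ i, u i • (Pi.single i (1:ℝ) : Fin d → ℝ) = u := by
  funext j
  rw [Finset.sum_apply]
  simp [Pi.single_apply]

lemma clm_apply_decomp (L : ((Fin d → ℝ) × (Fin d → ℝ)) →L[ℝ] ℂ) (u w : Fin d → ℝ) :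
    L (u, w) = (∑ i, u i • L (Pi.single i 1, 0)) + ∑ j, w j • L (0, Pi.single j 1) := by
  have hu : ((u, w) : (Fin d → ℝ) × (Fin d → ℝ))
      = (∑ i, u i • ((Pi.single i (1:ℝ), (0 : Fin d → ℝ)) : (Fin d → ℝ) × (Fin d → ℝ)))
      + ∑ j, w j • (((0 : Fin d → ℝ), Pi.single j (1:ℝ)) : (Fin d → ℝ) × (Fin d → ℝ)) := by
    apply Prod.ext
    · simp [Prod.fst_sum, pi_single_sum]
    · simp [Prod.snd_sum, pi_single_sum]
  have h1 : ∀ (c : ℝ) (a : Fin d → ℝ),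
      ((c • a, (0 : Fin d → ℝ)) : (Fin d → ℝ) × (Fin d → ℝ)) = c • (a, 0) := by
    intro c a; rw [Prod.smul_mk, smul_zero]
  have h2 : ∀ (c : ℝ) (b : Fin d → ℝ),
      (((0 : Fin d → ℝ), c • b) : (Fin d → ℝ) × (Fin d → ℝ)) = c • (0, b) := by
    intro c b; rw [Prod.smul_mk, smul_zero]
  rw [hu, map_add, map_sum, map_sum]
  simp only [h1, h2, ContinuousLinearMap.map_smul]

lemma clm_decomp (L : ((Fin d → ℝ) × (Fin d → ℝ)) →L[ℝ] ℂ) :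
    L = (∑ i, L (Pi.single i 1, 0) • lam1 d i) + ∑ j, L (0, Pi.single j 1) • lam2 d j := by
  apply ContinuousLinearMap.ext
  rintro ⟨u, w⟩
  rw [clm_apply_decomp L u w]
  simp only [ContinuousLinearMap.add_apply, ContinuousLinearMap.sum_apply,
    ContinuousLinearMap.smul_apply, lam1_apply, lam2_apply, smul_eq_mul]
  congr 1 <;> exact Finset.sum_congr rfl fun i _ => by
    rw [Complex.real_smul, mul_comm]

lemma opNorm_le_sum_dirs (L : ((Fin d → ℝ) × (Fin d → ℝ)) →L[ℝ] ℂ) :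
    ‖L‖ ≤ (∑ i, ‖L (Pi.single i 1, 0)‖) + ∑ j, ‖L (0, Pi.single j 1)‖ := by
  refine L.opNorm_le_bound (by positivity) ?_
  rintro ⟨u, w⟩
  rw [clm_apply_decomp L u w]
  calc ‖(∑ i, u i • L (Pi.single i 1, 0)) + ∑ j, w j • L (0, Pi.single j 1)‖
      ≤ ‖∑ i, u i • L (Pi.single i 1, 0)‖ + ‖∑ j, w j • L (0, Pi.single j 1)‖ :=
        norm_add_le _ _
    _ ≤ (∑ i, ‖u i • L (Pi.single i 1, 0)‖) + ∑ j, ‖w j • L (0, Pi.single j 1)‖ :=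
        add_le_add (norm_sum_le _ _) (norm_sum_le _ _)
    _ ≤ (∑ i, ‖L (Pi.single i 1, 0)‖ * ‖((u, w) : (Fin d → ℝ) × (Fin d → ℝ))‖)
        + ∑ j, ‖L (0, Pi.single j 1)‖ * ‖((u, w) : (Fin d → ℝ) × (Fin d → ℝ))‖ := by
        apply add_le_add <;> apply Finset.sum_le_sum <;> intro k _
        · rw [norm_smul, mul_comm]
          apply mul_le_mul_of_nonneg_left _ (norm_nonneg _)
          calc ‖u k‖ ≤ ‖u‖ := norm_le_pi_norm u k
            _ ≤ ‖((u, w) : (Fin d → ℝ) × (Fin d → ℝ))‖ := norm_fst_le (u, w)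
        · rw [norm_smul, mul_comm]
          apply mul_le_mul_of_nonneg_left _ (norm_nonneg _)
          calc ‖w k‖ ≤ ‖w‖ := norm_le_pi_norm w k
            _ ≤ ‖((u, w) : (Fin d → ℝ) × (Fin d → ℝ))‖ := norm_snd_le (u, w)
    _ = ((∑ i, ‖L (Pi.single i 1, 0)‖) + ∑ j, ‖L (0, Pi.single j 1)‖)
        * ‖((u, w) : (Fin d → ℝ) × (Fin d → ℝ))‖ := by
        rw [← Finset.sum_mul, ← Finset.sum_mul, add_mul]

lemma norm_prodDirs_le {v : (Fin d → ℝ) × (Fin d → ℝ)} (hv : v ∈ prodDirs d d) : ‖v‖ ≤ 1 := by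
  rcases hv with ⟨i, rfl⟩ | ⟨j, rfl⟩ <;>
    simp [Prod.norm_def, Pi.norm_single]

end ExpKerAux2

abbrev EE (d : ℕ) := (Fin d → ℝ) × (Fin d → ℝ)

namespace ExpKerAux3
open ExpKerAux ExpKerAux2

variable {d : ℕ} {S : Set (Fin d → ℝ)}

noncomputable def compKer (S : Set (Fin d → ℝ)) (F G : EE d → ℂ) : EE d → ℂ :=
  fun q => ∫ ξ in S, F (q.1, ξ) * G (ξ, q.2)

def IsKer (S : Set (Fin d → ℝ)) (F : EE d → ℂ) : Prop :=
  ContDiff ℝ (⊤:ℕ∞) F ∧ Function.support F ⊆ S ×ˢ S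

lemma IsKer.dd (hS : IsCompact S) {F : EE d → ℂ} (hF : IsKer S F) (v : EE d) :
    IsKer S (dirDeriv v F) :=
  ⟨contDiff_dirDeriv hF.1 v, support_dirDeriv (hS.prod hS).isClosed hF.2 v⟩

lemma IsKer.exists_bound (hS : IsCompact S) {F : EE d → ℂ} (hF : IsKer S F) :
    ∃ c : ℝ, 0 ≤ c ∧ (∀ q, ‖F q‖ ≤ c) ∧ ∀ q, ‖fderiv ℝ F q‖ ≤ c := by
  have hcs : HasCompactSupport F :=
    HasCompactSupport.intro (hS.prod hS)
      (fun x hx => Function.notMem_support.1 fun h => hx (hF.2 h))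
  obtain ⟨c1, hc1⟩ := hcs.exists_bound_of_continuous hF.1.continuous
  obtain ⟨c2, hc2⟩ := (hcs.fderiv (𝕜 := ℝ)).exists_bound_of_continuous
    (hF.1.continuous_fderiv (by simp))
  refine ⟨max 0 (max c1 c2), le_max_left _ _, fun q => ?_, fun q => ?_⟩
  · exact le_trans (hc1 q) (le_trans (le_max_left _ _) (le_max_right _ _))
  · exact le_trans (hc2 q) (le_trans (le_max_right _ _) (le_max_right _ _))

noncomputable def P1 (d : ℕ) : EE d →L[ℝ] EE d :=
  (ContinuousLinearMap.fst ℝ (Fin d → ℝ) (Fin d → ℝ)).prod 0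

noncomputable def P2 (d : ℕ) : EE d →L[ℝ] EE d :=
  (0 : EE d →L[ℝ] (Fin d → ℝ)).prod (ContinuousLinearMap.snd ℝ (Fin d → ℝ) (Fin d → ℝ))

lemma norm_P1_le : ‖P1 d‖ ≤ 1 := by
  refine ContinuousLinearMap.opNorm_le_bound _ zero_le_one fun v => ?_
  have h1 : P1 d v = (v.1, 0) := rfl
  rw [h1, one_mul]
  have h2 : ‖((v.1, (0 : Fin d → ℝ)) : EE d)‖ = ‖v.1‖ := by
    simp [Prod.norm_def]
  rw [h2]
  exact norm_fst_le v

lemma norm_P2_le : ‖P2 d‖ ≤ 1 := by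
  refine ContinuousLinearMap.opNorm_le_bound _ zero_le_one fun v => ?_
  have h1 : P2 d v = (0, v.2) := rfl
  rw [h1, one_mul]
  have h2 : ‖(((0 : Fin d → ℝ), v.2) : EE d)‖ = ‖v.2‖ := by
    simp [Prod.norm_def]
  rw [h2]
  exact norm_snd_le v

noncomputable def phi' (F G : EE d → ℂ) (q : EE d) (ξ : Fin d → ℝ) : EE d →L[ℝ] ℂ :=
  F (q.1, ξ) • ((fderiv ℝ G (ξ, q.2)).comp (P2 d))
    + G (ξ, q.2) • ((fderiv ℝ F (q.1, ξ)).comp (P1 d))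

lemma integrand_hasFDerivAt {F G : EE d → ℂ} (hF : ContDiff ℝ (⊤:ℕ∞) F)
    (hG : ContDiff ℝ (⊤:ℕ∞) G) (ξ : Fin d → ℝ) (q : EE d) :
    HasFDerivAt (fun p : EE d => F (p.1, ξ) * G (ξ, p.2)) (phi' F G q ξ) q := by
  have h0F : HasFDerivAt (fun p : EE d => ((p.1, ξ) : EE d)) (P1 d) q :=
    hasFDerivAt_fst.prodMk (hasFDerivAt_const ξ q)
  have h0G : HasFDerivAt (fun p : EE d => ((ξ, p.2) : EE d)) (P2 d) q :=
    (hasFDerivAt_const ξ q).prodMk hasFDerivAt_snd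
  have hF1 : HasFDerivAt (fun p : EE d => F (p.1, ξ))
      ((fderiv ℝ F (q.1, ξ)).comp (P1 d)) q :=
    ((hF.differentiable (by simp) (q.1, ξ)).hasFDerivAt).comp q h0F
  have hG1 : HasFDerivAt (fun p : EE d => G (ξ, p.2))
      ((fderiv ℝ G (ξ, q.2)).comp (P2 d)) q :=
    ((hG.differentiable (by simp) (ξ, q.2)).hasFDerivAt).comp q h0G
  exact hF1.mul hG1

lemma phi'_continuous {F G : EE d → ℂ} (hF : ContDiff ℝ (⊤:ℕ∞) F)
    (hG : ContDiff ℝ (⊤:ℕ∞) G) (q : EE d) :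
    Continuous fun ξ : Fin d → ℝ => phi' F G q ξ := by
  have cF : Continuous fun ξ : Fin d → ℝ => F (q.1, ξ) :=
    hF.continuous.comp (continuous_const.prodMk continuous_id)
  have cG : Continuous fun ξ : Fin d → ℝ => G (ξ, q.2) :=
    hG.continuous.comp (continuous_id.prodMk continuous_const)
  have cF' : Continuous fun ξ : Fin d → ℝ => (fderiv ℝ F (q.1, ξ)).comp (P1 d) :=
    ((hF.continuous_fderiv (by simp)).comp
      (continuous_const.prodMk continuous_id)).clm_comp continuous_const
  have cG' : Continuous fun ξ : Fin d → ℝ => (fderiv ℝ G (ξ, q.2)).comp (P2 d) :=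
    ((hG.continuous_fderiv (by simp)).comp
      (continuous_id.prodMk continuous_const)).clm_comp continuous_const
  exact (cF.smul cG').add (cG.smul cF')

lemma integrand_continuous {F G : EE d → ℂ} (hF : Continuous F) (hG : Continuous G)
    (q : EE d) : Continuous fun ξ : Fin d → ℝ => F (q.1, ξ) * G (ξ, q.2) :=
  (hF.comp (continuous_const.prodMk continuous_id)).mul
    (hG.comp (continuous_id.prodMk continuous_const))

lemma norm_phi'_le {F G : EE d → ℂ} {cF cG : ℝ}
    (hcF : ∀ p, ‖F p‖ ≤ cF) (hcF' : ∀ p, ‖fderiv ℝ F p‖ ≤ cF)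
    (hcG : ∀ p, ‖G p‖ ≤ cG) (hcG' : ∀ p, ‖fderiv ℝ G p‖ ≤ cG)
    (hcF0 : 0 ≤ cF) (hcG0 : 0 ≤ cG) (q : EE d) (ξ : Fin d → ℝ) :
    ‖phi' F G q ξ‖ ≤ cF * cG + cG * cF := by
  refine le_trans (norm_add_le _ _) (add_le_add ?_ ?_)
  · refine le_trans (ContinuousLinearMap.opNorm_smul_le _ _) ?_
    calc ‖F (q.1, ξ)‖ * ‖(fderiv ℝ G (ξ, q.2)).comp (P2 d)‖
        ≤ cF * (‖fderiv ℝ G (ξ, q.2)‖ * ‖P2 d‖) :=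
          mul_le_mul (hcF _) (ContinuousLinearMap.opNorm_comp_le _ _) (norm_nonneg _) hcF0
      _ ≤ cF * (cG * 1) := by
          apply mul_le_mul_of_nonneg_left _ hcF0
          exact mul_le_mul (hcG' _) norm_P2_le (norm_nonneg _) hcG0
      _ = cF * cG := by ring
  · refine le_trans (ContinuousLinearMap.opNorm_smul_le _ _) ?_
    calc ‖G (ξ, q.2)‖ * ‖(fderiv ℝ F (q.1, ξ)).comp (P1 d)‖
        ≤ cG * (‖fderiv ℝ F (q.1, ξ)‖ * ‖P1 d‖) :=
          mul_le_mul (hcG _) (ContinuousLinearMap.opNorm_comp_le _ _) (norm_nonneg _) hcG0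
      _ ≤ cG * (cF * 1) := by
          apply mul_le_mul_of_nonneg_left _ hcG0
          exact mul_le_mul (hcF' _) norm_P1_le (norm_nonneg _) hcF0
      _ = cG * cF := by ring

lemma compKer_hasFDerivAt (hS : IsCompact S) {F G : EE d → ℂ}
    (hF : IsKer S F) (hG : IsKer S G) (q₀ : EE d) :
    HasFDerivAt (compKer S F G) (∫ ξ in S, phi' F G q₀ ξ) q₀ := by
  obtain ⟨cF, hcF0, hcF, hcF'⟩ := hF.exists_bound hS
  obtain ⟨cG, hcG0, hcG, hcG'⟩ := hG.exists_bound hS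
  exact hasFDerivAt_integral_of_dominated_of_fderiv_le (μ := volume.restrict S)
    (F := fun (q : EE d) (ξ : Fin d → ℝ) => F (q.1, ξ) * G (ξ, q.2))
    (F' := fun q ξ => phi' F G q ξ) (bound := fun _ => cF * cG + cG * cF)
    Filter.univ_mem
    (Filter.Eventually.of_forall fun q =>
      (integrand_continuous hF.1.continuous hG.1.continuous q).aestronglyMeasurable)
    ((integrand_continuous hF.1.continuous hG.1.continuous q₀).continuousOn.integrableOn_compact hS)
    ((phi'_continuous hF.1 hG.1 q₀).aestronglyMeasurable)
    (Filter.Eventually.of_forall fun ξ q _ =>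
      norm_phi'_le hcF hcF' hcG hcG' hcF0 hcG0 q ξ)
    ((continuous_const.continuousOn.integrableOn_compact hS))
    (Filter.Eventually.of_forall fun ξ q _ => integrand_hasFDerivAt hF.1 hG.1 ξ q)

lemma compKer_differentiable (hS : IsCompact S) {F G : EE d → ℂ}
    (hF : IsKer S F) (hG : IsKer S G) : Differentiable ℝ (compKer S F G) :=
  fun q => (compKer_hasFDerivAt hS hF hG q).differentiableAt

lemma phi'_integrableOn (hS : IsCompact S) {F G : EE d → ℂ}
    (hF : IsKer S F) (hG : IsKer S G) (q : EE d) :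
    IntegrableOn (phi' F G q) S volume :=
  (phi'_continuous hF.1 hG.1 q).continuousOn.integrableOn_compact hS

lemma fderiv_compKer_apply (hS : IsCompact S) {F G : EE d → ℂ}
    (hF : IsKer S F) (hG : IsKer S G) (q : EE d) (v : EE d) :
    fderiv ℝ (compKer S F G) q v = ∫ ξ in S, phi' F G q ξ v := by
  rw [(compKer_hasFDerivAt hS hF hG q).fderiv]
  exact ContinuousLinearMap.integral_apply (phi'_integrableOn hS hF hG q) v

lemma dirDeriv_compKer_fst (hS : IsCompact S) {F G : EE d → ℂ}
    (hF : IsKer S F) (hG : IsKer S G) (a : Fin d → ℝ) :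
    dirDeriv ((a, 0) : EE d) (compKer S F G)
      = compKer S (dirDeriv ((a, 0) : EE d) F) G := by
  funext q
  show fderiv ℝ (compKer S F G) q (a, 0) = _
  rw [fderiv_compKer_apply hS hF hG q (a, 0)]
  refine integral_congr_ae (Filter.Eventually.of_forall fun ξ => ?_)
  show phi' F G q ξ (a, 0) = dirDeriv ((a, 0) : EE d) F (q.1, ξ) * G (ξ, q.2)
  simp only [phi', ContinuousLinearMap.add_apply, ContinuousLinearMap.smul_apply,
    ContinuousLinearMap.comp_apply]
  have h2 : P2 d ((a, 0) : EE d) = 0 := rfl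
  have h1 : P1 d ((a, 0) : EE d) = ((a, 0) : EE d) := rfl
  rw [h2, h1, map_zero, smul_zero, zero_add, smul_eq_mul, mul_comm]
  rfl

lemma dirDeriv_compKer_snd (hS : IsCompact S) {F G : EE d → ℂ}
    (hF : IsKer S F) (hG : IsKer S G) (b : Fin d → ℝ) :
    dirDeriv ((0, b) : EE d) (compKer S F G)
      = compKer S F (dirDeriv ((0, b) : EE d) G) := by
  funext q
  show fderiv ℝ (compKer S F G) q (0, b) = _
  rw [fderiv_compKer_apply hS hF hG q (0, b)]
  refine integral_congr_ae (Filter.Eventually.of_forall fun ξ => ?_)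
  show phi' F G q ξ (0, b) = F (q.1, ξ) * dirDeriv ((0, b) : EE d) G (ξ, q.2)
  simp only [phi', ContinuousLinearMap.add_apply, ContinuousLinearMap.smul_apply,
    ContinuousLinearMap.comp_apply]
  have h1 : P1 d ((0, b) : EE d) = 0 := rfl
  have h2 : P2 d ((0, b) : EE d) = ((0, b) : EE d) := rfl
  rw [h1, h2, map_zero, smul_zero, add_zero, smul_eq_mul]
  rfl

lemma support_compKer {F G : EE d → ℂ} (hF : Function.support F ⊆ S ×ˢ S)
    (hG : Function.support G ⊆ S ×ˢ S) :
    Function.support (compKer S F G) ⊆ S ×ˢ S := by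
  intro q hq
  by_contra hmem
  apply hq
  have hnot : ¬(q.1 ∈ S ∧ q.2 ∈ S) := fun h => hmem (Set.mem_prod.2 h)
  rcases not_and_or.1 hnot with h1 | h2
  · have hz : ∀ ξ, F (q.1, ξ) = 0 := fun ξ => by
      by_contra h0
      exact h1 (hF (Function.mem_support.2 h0)).1
    simp [compKer, hz]
  · have hz : ∀ ξ, G (ξ, q.2) = 0 := fun ξ => by
      by_contra h0
      exact h2 (hG (Function.mem_support.2 h0)).2
    simp [compKer, hz]

end ExpKerAux3

namespace ExpKerAux3
open ExpKerAux ExpKerAux2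

variable {d : ℕ} {S : Set (Fin d → ℝ)}

set_option maxHeartbeats 1000000 in
lemma contDiff_smul_const {n : ℕ} {g : EE d → ℂ} (hg : ContDiff ℝ (n:ℕ) g)
    (L : EE d →L[ℝ] ℂ) : ContDiff ℝ (n:ℕ) fun q => g q • L := by
  have k : ContDiff ℝ (n:ℕ) fun q =>
      (ContinuousLinearMap.lsmul ℝ ℂ (g q) : (EE d →L[ℝ] ℂ) →L[ℝ] (EE d →L[ℝ] ℂ)) L :=
    ((ContinuousLinearMap.lsmul ℝ ℂ).contDiff.comp hg).clm_apply contDiff_const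
  simpa only [ContinuousLinearMap.lsmul_apply] using k

lemma contDiff_compKer (hS : IsCompact S) :
    ∀ (n : ℕ) (F G : EE d → ℂ), IsKer S F → IsKer S G →
      ContDiff ℝ (n : ℕ) (compKer S F G) := by
  intro n
  induction n with
  | zero =>
    intro F G hF hG
    rw [show ((0:ℕ) : WithTop ℕ∞) = 0 by norm_cast, contDiff_zero]
    exact (compKer_differentiable hS hF hG).continuous
  | succ n ih =>
    intro F G hF hG
    rw [show ((n+1:ℕ) : WithTop ℕ∞) = (n : WithTop ℕ∞) + 1 by norm_cast]
    refine contDiff_succ_iff_fderiv.2 ⟨compKer_differentiable hS hF hG, by simp, ?_⟩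
    have hform : fderiv ℝ (compKer S F G) = fun q =>
        (∑ i, compKer S (dirDeriv ((Pi.single i 1, 0) : EE d) F) G q • lam1 d i)
        + ∑ j, compKer S F (dirDeriv ((0, Pi.single j 1) : EE d) G) q • lam2 d j := by
      funext q
      rw [clm_decomp (fderiv ℝ (compKer S F G) q)]
      congr 1
      · refine Finset.sum_congr rfl fun i _ => ?_
        congr 1
        exact congrFun (dirDeriv_compKer_fst hS hF hG (Pi.single i 1)) q
      · refine Finset.sum_congr rfl fun j _ => ?_
        congr 1
        exact congrFun (dirDeriv_compKer_snd hS hF hG (Pi.single j 1)) q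
    rw [hform]
    apply ContDiff.add
    · exact ContDiff.sum fun i _ =>
        contDiff_smul_const (ih _ _ (hF.dd hS _) hG) (lam1 d i)
    · exact ContDiff.sum fun j _ =>
        contDiff_smul_const (ih _ _ hF (hG.dd hS _)) (lam2 d j)

lemma IsKer.compKer' (hS : IsCompact S) {F G : EE d → ℂ}
    (hF : IsKer S F) (hG : IsKer S G) : IsKer S (compKer S F G) :=
  ⟨contDiff_infty.2 fun n => contDiff_compKer hS n F G hF hG,
   support_compKer hF.2 hG.2⟩

lemma norm_compKer_le (hS : IsCompact S) {F G : EE d → ℂ} {cF cG : ℝ}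
    (hcF : ∀ p, ‖F p‖ ≤ cF) (hcG : ∀ p, ‖G p‖ ≤ cG) (q : EE d) :
    ‖compKer S F G q‖ ≤ cF * cG * (volume S).toReal := by
  have h0F : 0 ≤ cF := le_trans (norm_nonneg _) (hcF q)
  have h0G : 0 ≤ cG := le_trans (norm_nonneg _) (hcG q)
  have hb : ∀ᵐ ξ ∂(volume.restrict S), ‖F (q.1, ξ) * G (ξ, q.2)‖ ≤ cF * cG :=
    Filter.Eventually.of_forall fun ξ => by
      rw [norm_mul]
      exact mul_le_mul (hcF _) (hcG _) (norm_nonneg _) h0F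
  exact norm_setIntegral_le_of_norm_le_const_ae hS.measure_lt_top hb

/-- Iterated directional derivatives of a composition of kernels. -/
lemma norm_itDeriv_compKer (hS : IsCompact S) :
    ∀ (vs : List (EE d)), (∀ v ∈ vs, v ∈ prodDirs d d) →
    ∀ (F G : EE d → ℂ) (cF cG : ℝ), IsKer S F → IsKer S G →
    (∀ ws : List (EE d), ws.length ≤ vs.length → (∀ w ∈ ws, w ∈ prodDirs d d) →
      ∀ p, ‖itDeriv ws F p‖ ≤ cF) →
    (∀ ws : List (EE d), ws.length ≤ vs.length → (∀ w ∈ ws, w ∈ prodDirs d d) →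
      ∀ p, ‖itDeriv ws G p‖ ≤ cG) →
    ∀ q, ‖itDeriv vs (compKer S F G) q‖ ≤ cF * cG * (volume S).toReal := by
  intro vs
  induction vs with
  | nil =>
    intro _ F G cF cG hF hG hFb hGb q
    exact norm_compKer_le hS (hFb [] (by simp) (by simp)) (hGb [] (by simp) (by simp)) q
  | cons v vs ih =>
    intro hdirs F G cF cG hF hG hFb hGb q
    rw [itDeriv_cons]
    have hv := hdirs v List.mem_cons_self
    have htail : ∀ w ∈ vs, w ∈ prodDirs d d := fun w hw =>
      hdirs w (List.mem_cons_of_mem _ hw)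
    rcases hv with ⟨i, rfl⟩ | ⟨j, rfl⟩
    · rw [dirDeriv_compKer_fst hS hF hG]
      refine ih htail _ G cF cG (hF.dd hS _) hG ?_ ?_ q
      · intro ws hl hd p
        rw [← itDeriv_cons]
        exact hFb (((Pi.single i 1, 0) : EE d) :: ws)
          (by simpa using Nat.succ_le_succ hl)
          (by
            intro w hw
            rcases List.mem_cons.1 hw with rfl | hw'
            · exact Or.inl ⟨i, rfl⟩
            · exact hd w hw') p
      · intro ws hl hd p
        exact hGb ws (le_trans hl (Nat.le_succ _)) hd p
    · rw [dirDeriv_compKer_snd hS hF hG]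
      refine ih htail F _ cF cG hF (hG.dd hS _) ?_ ?_ q
      · intro ws hl hd p
        exact hFb ws (le_trans hl (Nat.le_succ _)) hd p
      · intro ws hl hd p
        rw [← itDeriv_cons]
        exact hGb (((0, Pi.single j 1) : EE d) :: ws)
          (by simpa using Nat.succ_le_succ hl)
          (by
            intro w hw
            rcases List.mem_cons.1 hw with rfl | hw'
            · exact Or.inr ⟨j, rfl⟩
            · exact hd w hw') p

lemma iterKer_succ (H : EE d → ℂ) (n : ℕ) :
    iterKer S H (n + 1) = compKer S H (iterKer S H n) := rfl

lemma isKer_iterKer (hS : IsCompact S) {H : EE d → ℂ} (hH : IsKer S H) :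
    ∀ n, IsKer S (iterKer S H n)
  | 0 => hH
  | n + 1 => by
    rw [iterKer_succ]
    exact hH.compKer' hS (isKer_iterKer hS hH n)

lemma norm_itDeriv_iterKer (hS : IsCompact S) {H : EE d → ℂ} (hH : IsKer S H)
    {M : ℝ} (l : ℕ)
    (hM : ∀ ws : List (EE d), ws.length ≤ l → (∀ w ∈ ws, w ∈ prodDirs d d) →
      ∀ p, ‖itDeriv ws H p‖ ≤ M) :
    ∀ n (vs : List (EE d)), vs.length ≤ l → (∀ v ∈ vs, v ∈ prodDirs d d) →
      ∀ q, ‖itDeriv vs (iterKer S H n) q‖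
        ≤ M ^ (n + 1) * (volume S).toReal ^ n := by
  intro n
  induction n with
  | zero =>
    intro vs hl hd q
    simpa [iterKer] using hM vs hl hd q
  | succ n ih =>
    intro vs hl hd q
    rw [iterKer_succ]
    have hstep := norm_itDeriv_compKer hS vs hd H (iterKer S H n) M
      (M ^ (n + 1) * (volume S).toReal ^ n) hH (isKer_iterKer hS hH n)
      (fun ws hws hwd p => hM ws (le_trans hws hl) hwd p)
      (fun ws hws hwd p => ih ws (le_trans hws hl) hwd p) q
    calc ‖itDeriv vs (compKer S H (iterKer S H n)) q‖
        ≤ M * (M ^ (n + 1) * (volume S).toReal ^ n) * (volume S).toReal := hstep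
      _ = M ^ (n + 2) * (volume S).toReal ^ (n + 1) := by ring

end ExpKerAux3

namespace ExpKerAux4
open ExpKerAux ExpKerAux2

variable {d : ℕ}

lemma itDeriv_tsum :
    ∀ (vs : List (EE d)) (f : ℕ → EE d → ℂ) (u : ℕ → ℝ),
    Summable u → (∀ n, ContDiff ℝ (⊤:ℕ∞) (f n)) →
    (∀ v ∈ vs, v ∈ prodDirs d d) →
    (∀ n (ws : List (EE d)), ws.length ≤ vs.length → (∀ w ∈ ws, w ∈ prodDirs d d) →
      ∀ x, ‖itDeriv ws (f n) x‖ ≤ u n) →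
    ∀ x, itDeriv vs (fun y => ∑' n, f n y) x = ∑' n, itDeriv vs (f n) x := by
  intro vs
  induction vs with
  | nil => intro f u hu hsm _ hbd x; rfl
  | cons v vs ih =>
    intro f u hu hsm hdirs hbd x
    have hv : v ∈ prodDirs d d := hdirs v List.mem_cons_self
    have hdiff : ∀ n, Differentiable ℝ (f n) := fun n =>
      (hsm n).differentiable (by simp)
    have hf' : ∀ (n : ℕ) (y : EE d), ‖fderiv ℝ (f n) y‖ ≤ (2 * (d:ℝ)) * u n := by
      intro n y
      refine le_trans (opNorm_le_sum_dirs _) ?_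
      have h1 : ∀ i : Fin d, ‖fderiv ℝ (f n) y ((Pi.single i 1, 0) : EE d)‖ ≤ u n := by
        intro i
        have := hbd n [((Pi.single i 1, 0) : EE d)] (by simp)
          (fun w hw => by
            rw [List.mem_singleton.1 hw]
            exact Or.inl ⟨i, rfl⟩) y
        exact this
      have h2 : ∀ j : Fin d, ‖fderiv ℝ (f n) y ((0, Pi.single j 1) : EE d)‖ ≤ u n := by
        intro j
        have := hbd n [((0, Pi.single j 1) : EE d)] (by simp)
          (fun w hw => by
            rw [List.mem_singleton.1 hw]
            exact Or.inr ⟨j, rfl⟩) y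
        exact this
      calc (∑ i, ‖fderiv ℝ (f n) y ((Pi.single i 1, 0) : EE d)‖)
          + ∑ j, ‖fderiv ℝ (f n) y ((0, Pi.single j 1) : EE d)‖
          ≤ (∑ _i : Fin d, u n) + ∑ _j : Fin d, u n :=
            add_le_add (Finset.sum_le_sum fun i _ => h1 i)
              (Finset.sum_le_sum fun j _ => h2 j)
        _ = (2 * (d:ℝ)) * u n := by
            simp [Finset.sum_const, Finset.card_univ]
            ring
    have hsum0 : Summable fun n => f n x :=
      Summable.of_norm_bounded hu fun n => hbd n [] (by simp) (by simp) x
    have hu' : Summable fun n => (2 * (d:ℝ)) * u n := hu.mul_left _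
    have hder : (fderiv ℝ fun y => ∑' n, f n y) = fun y => ∑' n, fderiv ℝ (f n) y :=
      fderiv_tsum (x₀ := x) hu' hdiff hf' hsum0
    have hdd : dirDeriv v (fun y => ∑' n, f n y) = fun y => ∑' n, dirDeriv v (f n) y := by
      funext y
      have hs : Summable fun n => fderiv ℝ (f n) y :=
        Summable.of_norm_bounded hu' fun n => hf' n y
      show fderiv ℝ (fun y => ∑' n, f n y) y v = _
      rw [hder]
      have := (ContinuousLinearMap.apply ℝ ℂ v).map_tsum hs
      simpa [dirDeriv] using this
    rw [itDeriv_cons, hdd]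
    have htail : ∀ w ∈ vs, w ∈ prodDirs d d := fun w hw =>
      hdirs w (List.mem_cons_of_mem _ hw)
    have key := ih (fun n => dirDeriv v (f n)) u hu
      (fun n => contDiff_dirDeriv (hsm n) v) htail
      (fun n ws hl hd y => by
        have := hbd n (v :: ws) (by simpa using Nat.succ_le_succ hl)
          (fun w hw => by
            rcases List.mem_cons.1 hw with rfl | hw'
            · exact hv
            · exact hd w hw') y
        exact this) x
    rw [key]
    exact tsum_congr fun n => rfl

end ExpKerAux4

set_option maxHeartbeats 1000000 in
/-- For a net `(H_ε)` of smooth kernels supported in `K × K` which is of logarithmic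
type, the net of exponential kernels `(S_ε)` is moderate. -/
theorem exponential_kernel_net_is_moderate
    {d : ℕ} (S : Set (Fin d → ℝ)) (hS : IsCompact S) (hvol : 0 < (volume S).toReal)
    (H : ℝ → (Fin d → ℝ) × (Fin d → ℝ) → ℂ)
    (hsm : ∀ ε ∈ Ioc (0:ℝ) 1, ContDiff ℝ (⊤:ℕ∞) (H ε))
    (hsupp : ∀ ε ∈ Ioc (0:ℝ) 1, Function.support (H ε) ⊆ S ×ˢ S)
    (hlog : ∀ A : Set ((Fin d → ℝ) × (Fin d → ℝ)), IsCompact A → ∀ l : ℕ,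
      ∃ C > (0:ℝ), ∃ ε₀ ∈ Ioc (0:ℝ) 1, ∀ ε ∈ Ioc (0:ℝ) 1, ε ≤ ε₀ →
        pSemi (prodDirs d d) A l (H ε) ≤ C * |Real.log ε|)
    (Sexp : ℝ → (Fin d → ℝ) × (Fin d → ℝ) → ℂ)
    (hSexp : ∀ ε q, Sexp ε q = ∑' n : ℕ, (((n+1).factorial : ℂ))⁻¹ * iterKer S (H ε) n q) :
    IsModerate (prodDirs d d) Sexp := by
  classical
  intro A hA l
  obtain ⟨C, hC, ε₀, hε₀, hlog'⟩ := hlog (S ×ˢ S) (hS.prod hS) l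
  set V : ℝ := (volume S).toReal with hVdef
  have hV0 : 0 ≤ V := ENNReal.toReal_nonneg
  refine ⟨⌈C * V⌉₊ + 1, C, hC, ε₀, hε₀, ?_⟩
  intro ε hε hεε₀
  have hε1 : 0 < ε := hε.1
  have hε2 : ε ≤ 1 := hε.2
  have hKer : ExpKerAux3.IsKer S (H ε) := ⟨hsm ε hε, hsupp ε hε⟩
  set M : ℝ := C * |Real.log ε| with hMdef
  have hM0 : 0 ≤ M := mul_nonneg hC.le (abs_nonneg _)
  -- uniform bound on derivatives of `H ε` of order `≤ l`
  have hHbd : ∀ ws : List (EE d), ws.length ≤ l → (∀ w ∈ ws, w ∈ prodDirs d d) →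
      ∀ p : EE d, ‖itDeriv ws (H ε) p‖ ≤ M := by
    intro ws hl hd p
    by_cases hp : p ∈ S ×ˢ S
    · have hbdd : BddAbove {r | ∃ vs : List (EE d), vs.length ≤ l ∧
          (∀ v ∈ vs, v ∈ prodDirs d d) ∧ ∃ x ∈ S ×ˢ S, r = ‖itDeriv vs (H ε) x‖} := by
        obtain ⟨R, hR0, hR⟩ := ExpKerAux.exists_uniform_bound (hsm ε hε) (hS.prod hS) l
        refine ⟨R, ?_⟩
        rintro r ⟨vs, hlen, hdirs, x, hx, rfl⟩
        calc ‖itDeriv vs (H ε) x‖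
            ≤ ‖iteratedFDeriv ℝ vs.length (H ε) x‖ :=
              ExpKerAux.norm_itDeriv_le_iteratedFDeriv (hsm ε hε) vs
                (fun w hw => ExpKerAux2.norm_prodDirs_le (hdirs w hw)) x
          _ ≤ R := hR vs.length hlen x hx
      have hmem : ‖itDeriv ws (H ε) p‖ ∈ {r | ∃ vs : List (EE d), vs.length ≤ l ∧
          (∀ v ∈ vs, v ∈ prodDirs d d) ∧ ∃ x ∈ S ×ˢ S, r = ‖itDeriv vs (H ε) x‖} :=
        ⟨ws, hl, hd, p, hp, rfl⟩
      exact le_trans (le_csSup hbdd hmem) (hlog' ε hε hεε₀)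
    · have hsub := ExpKerAux.support_itDeriv (hS.prod hS).isClosed (hsupp ε hε) ws
      have h0 : itDeriv ws (H ε) p = 0 := by
        by_contra h0
        exact hp (hsub (Function.mem_support.2 h0))
      rw [h0, norm_zero]
      exact hM0
  have hLn := ExpKerAux3.norm_itDeriv_iterKer hS hKer l hHbd
  -- the summands and their bounds
  set f : ℕ → EE d → ℂ := fun n q => (((n+1).factorial : ℂ))⁻¹ * iterKer S (H ε) n q with hfdef
  set u : ℕ → ℝ := fun n => (((n+1).factorial : ℝ))⁻¹ * (M ^ (n+1) * V ^ n) with hudef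
  have hfsm : ∀ n, ContDiff ℝ (⊤:ℕ∞) (f n) := fun n =>
    contDiff_const.mul (ExpKerAux3.isKer_iterKer hS hKer n).1
  have hfbd : ∀ (n : ℕ) (ws : List (EE d)), ws.length ≤ l →
      (∀ w ∈ ws, w ∈ prodDirs d d) → ∀ x, ‖itDeriv ws (f n) x‖ ≤ u n := by
    intro n ws hl hd x
    have hrw : itDeriv ws (f n) x
        = (((n+1).factorial : ℂ))⁻¹ * itDeriv ws (iterKer S (H ε) n) x :=
      congrFun (ExpKerAux.itDeriv_const_mul (ExpKerAux3.isKer_iterKer hS hKer n).1 _ ws) x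
    rw [hrw, norm_mul, norm_inv]
    have hnc : ‖(((n+1).factorial : ℕ) : ℂ)‖ = (((n+1).factorial : ℕ) : ℝ) := by
      simp
    rw [hnc]
    exact mul_le_mul_of_nonneg_left (hLn n ws hl hd x)
      (inv_nonneg.2 (Nat.cast_nonneg _))
  -- summability and sum bound
  have hcomp : ∀ n, u n ≤ M * ((M * V) ^ n / n.factorial) := by
    intro n
    have hfactinv : (((n+1).factorial : ℝ))⁻¹ ≤ ((n.factorial : ℝ))⁻¹ := by
      apply inv_anti₀
      · exact_mod_cast n.factorial_pos
      · exact_mod_cast Nat.factorial_le (Nat.le_succ n)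
    have e1 : M ^ (n+1) * V ^ n = M * (M * V) ^ n := by
      rw [mul_pow]; ring
    calc u n = (((n+1).factorial : ℝ))⁻¹ * (M * (M * V) ^ n) := by rw [hudef]; simp [e1]
      _ ≤ ((n.factorial : ℝ))⁻¹ * (M * (M * V) ^ n) :=
          mul_le_mul_of_nonneg_right hfactinv (by positivity)
      _ = M * ((M * V) ^ n / n.factorial) := by ring
  have hgsum : Summable fun n : ℕ => M * ((M * V) ^ n / n.factorial) :=
    (Real.summable_pow_div_factorial (M * V)).mul_left M
  have hu : Summable u :=
    Summable.of_nonneg_of_le (fun n => by positivity) hcomp hgsum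
  have htsum : ∑' n, u n ≤ M * Real.exp (M * V) := by
    have hexp : ∑' n : ℕ, M * ((M * V) ^ n / n.factorial) = M * Real.exp (M * V) := by
      rw [tsum_mul_left]
      congr 1
      rw [Real.exp_eq_exp_ℝ, NormedSpace.exp_eq_tsum_div]
    calc ∑' n, u n ≤ ∑' n : ℕ, M * ((M * V) ^ n / n.factorial) :=
        Summable.tsum_le_tsum hcomp hu hgsum
      _ = M * Real.exp (M * V) := hexp
  -- the function equality
  have hSexp_eq : Sexp ε = fun y => ∑' n, f n y := funext fun q => hSexp ε q
  -- final numeric estimates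
  have hlogabs : |Real.log ε| = -Real.log ε :=
    abs_of_nonpos (Real.log_nonpos hε1.le hε2)
  have hexp2 : Real.exp (M * V) = ε ^ (-(C * V)) := by
    rw [Real.rpow_def_of_pos hε1]
    congr 1
    rw [hMdef, hlogabs]
    ring
  have hstepB : ε ^ (-(C * V)) ≤ ε ^ (-((⌈C * V⌉₊ : ℝ))) :=
    Real.rpow_le_rpow_of_exponent_ge hε1 hε2 (neg_le_neg (Nat.le_ceil _))
  have hlogbound : |Real.log ε| ≤ ε⁻¹ := by
    rw [hlogabs, ← Real.log_inv]
    have := Real.log_le_sub_one_of_pos (inv_pos.2 hε1)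
    linarith
  have hMle : M ≤ C * ε⁻¹ := by
    rw [hMdef]
    exact mul_le_mul_of_nonneg_left hlogbound hC.le
  have hfinal : M * Real.exp (M * V) ≤ C * ε ^ (-((⌈C * V⌉₊ + 1 : ℕ) : ℤ)) := by
    have h1 : M * Real.exp (M * V) ≤ (C * ε⁻¹) * ε ^ (-((⌈C * V⌉₊ : ℝ))) := by
      apply mul_le_mul hMle _ (Real.exp_pos _).le (by positivity)
      rw [hexp2]
      exact hstepB
    have h2 : (C * ε⁻¹) * ε ^ (-((⌈C * V⌉₊ : ℝ)))
        = C * ε ^ (-((⌈C * V⌉₊ + 1 : ℕ) : ℤ)) := by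
      rw [← Real.rpow_neg_one ε, mul_assoc, ← Real.rpow_add hε1, ← Real.rpow_intCast]
      congr 2
      push_cast
      ring
    rw [← h2]
    exact h1
  -- conclude
  apply Real.sSup_le
  · rintro r ⟨vs, hlen, hdirs, x, hx, rfl⟩
    rw [hSexp_eq]
    rw [ExpKerAux4.itDeriv_tsum vs f u hu hfsm hdirs
      (fun n ws hl hd y => hfbd n ws (le_trans hl hlen) hd y) x]
    calc ‖∑' n, itDeriv vs (f n) x‖ ≤ ∑' n, u n :=
        tsum_of_norm_bounded hu.hasSum (fun n => hfbd n vs hlen hdirs x)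
      _ ≤ M * Real.exp (M * V) := htsum
      _ ≤ C * ε ^ (-((⌈C * V⌉₊ + 1 : ℕ) : ℤ)) := hfinal
  · positivity
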